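/- Fix n ≥ 2 and let A be a saturated class of morphisms of simplicial sets with the right cancellation property for monomorphisms which contains the left cone inclusions c_m for all 2 ≤ m < n. Then the canonical inclusion k_n : C_n → Λ[n,0] belongs to A. -/

import Mathlib

open CategoryTheory CategoryTheory.GrothendieckTopology CategoryTheory.Limits Simplicial SSet Opposite

noncomputable section

namespace BousfieldPaper

/-! ## Basic lifting-property classes of simplicial sets -/

/-- A Kan fibration: a map with the right lifting property against all horn inclusions. -/
def KanFibration {S T : SSet.{0}} (p : S ⟶ T) : Prop :=
  ∀ (n : ℕ) (i : Fin (n + 2)), HasLiftingProperty (Λ[n + 1, i].ι) p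

/-- An acyclic (trivial) Kan fibration: a map with the right lifting property against
all boundary inclusions. -/
def TrivialKanFibration {S T : SSet.{0}} (p : S ⟶ T) : Prop :=
  ∀ n : ℕ, HasLiftingProperty (∂Δ[n].ι) p

/-- The class of maps with the right lifting property against every map in `T`. -/
def rlpOf {C : Type*} [Category C] (T : MorphismProperty C) : MorphismProperty C :=
  fun _ _ p => ∀ ⦃A B : C⦄ (i : A ⟶ B), T i → HasLiftingProperty i p

/-- The class of maps with the left lifting property against every map in `T`. -/
def llpOf {C : Type*} [Category C] (T : MorphismProperty C) : MorphismProperty C :=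
  fun _ _ i => ∀ ⦃S T' : C⦄ (p : S ⟶ T'), T p → HasLiftingProperty i p

/-- The saturation `llp(rlp(S))` of a class of maps. -/
def saturationOf {C : Type*} [Category C] (S : MorphismProperty C) : MorphismProperty C :=
  llpOf (rlpOf S)

/-- The class of all horn inclusions (up to isomorphism of arrows). -/
def HornClass : MorphismProperty SSet.{0} := fun _ _ f =>
  ∃ (n : ℕ) (i : Fin (n + 2)), Nonempty (Arrow.mk f ≅ Arrow.mk (Λ[n + 1, i].ι))

/-- The class of left horn inclusions `Λ[n,0] → Δ[n]`, `n ≥ 2` (up to isomorphism of arrows). -/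
def LeftHornClass : MorphismProperty SSet.{0} := fun _ _ f =>
  ∃ n : ℕ, 2 ≤ n ∧ Nonempty (Arrow.mk f ≅ Arrow.mk (Λ[n, 0].ι))

/-- Anodyne maps: the saturation of the class of horn inclusions. -/
def Anodyne : MorphismProperty SSet.{0} := saturationOf HornClass

/-- A weak homotopy equivalence of simplicial sets (in the Kan--Quillen sense):
a map admitting a factorization as an anodyne map followed by an acyclic Kan fibration. -/
def WeakHomotopyEquivalence {S T : SSet.{0}} (f : S ⟶ T) : Prop :=
  ∃ (Z : SSet.{0}) (i : S ⟶ Z) (p : Z ⟶ T),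
    Anodyne i ∧ TrivialKanFibration p ∧ i ≫ p = f

/-! ## Saturated classes -/

/-- `f` is a retract of `g` in the arrow category. -/
def IsRetractOf {C : Type*} [Category C] {X Y X' Y' : C} (f : X ⟶ Y) (g : X' ⟶ Y') : Prop :=
  ∃ (i : Arrow.mk f ⟶ Arrow.mk g) (r : Arrow.mk g ⟶ Arrow.mk f), i ≫ r = 𝟙 _

/-- The inclusion functor of the subposet `{x | x < j}` of `J`. -/
def iioFunctor {J : Type} [Preorder J] (j : J) : Set.Iio j ⥤ J :=
  Monotone.functor (f := fun x => (x : J)) (fun _ _ h => h)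

/-- The cocone on the restriction of `F : J ⥤ C` to `{x | x < j}` with apex `F.obj j`. -/
def coconeBelow {J : Type} [Preorder J] {C : Type*} [Category C]
    (F : J ⥤ C) (j : J) : Cocone (iioFunctor j ⋙ F) where
  pt := F.obj j
  ι :=
    { app := fun x => F.map (homOfLE (le_of_lt x.2))
      naturality := fun x y g => by
        dsimp [iioFunctor, Monotone.functor]
        rw [← F.map_comp, Category.comp_id]
        congr 1 }

/-- A class of morphisms of simplicial sets is *saturated* (weakly saturated) if it is closed
under pushouts (cobase change), retracts and transfinite compositions. -/
structure IsSaturated (A : MorphismProperty SSet.{0}) : Prop where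
  pushout : ∀ ⦃X Y X' Y' : SSet.{0}⦄ (f : X ⟶ Y) (u : X ⟶ X') (v : Y ⟶ Y') (f' : X' ⟶ Y'),
    IsPushout f u v f' → A f → A f'
  retract : ∀ ⦃X Y X' Y' : SSet.{0}⦄ (f : X ⟶ Y) (g : X' ⟶ Y'),
    IsRetractOf f g → A g → A f
  transfinite : ∀ (J : Type) (_ : LinearOrder J) (_ : SuccOrder J) (_ : OrderBot J)
    (_ : WellFoundedLT J) (F : J ⥤ SSet.{0}) (c : Cocone F) (_ : IsColimit c),
    (∀ j : J, ¬IsMax j → A (F.map (homOfLE (Order.le_succ j)))) →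
    (∀ j : J, Order.IsSuccLimit j → Nonempty (IsColimit (coconeBelow F j))) →
    A (c.ι.app ⊥)

/-- Right cancellation property for monomorphisms. -/
def RightCancel (A : MorphismProperty SSet.{0}) : Prop :=
  ∀ ⦃X Y Z : SSet.{0}⦄ (u : X ⟶ Y) (v : Y ⟶ Z),
    Mono u → Mono v → A (u ≫ v) → A u → A v

/-- Left cancellation property for monomorphisms. -/
def LeftCancel (A : MorphismProperty SSet.{0}) : Prop :=
  ∀ ⦃X Y Z : SSet.{0}⦄ (u : X ⟶ Y) (v : Y ⟶ Z),
    Mono u → Mono v → A (u ≫ v) → A v → A u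

/-- 3-for-2 for monomorphisms: both left and right cancellation. -/
def ThreeForTwo (A : MorphismProperty SSet.{0}) : Prop :=
  RightCancel A ∧ LeftCancel A

/-! ## The left cone, the spine, and related subcomplexes of the standard simplex -/

/-- The left cone `C n ⊆ Δ[n]`: the union of the images of the initial edges `0 → i`. -/
def coneSub (n : ℕ) : Subfunctor Δ[n] where
  obj m := {α | ∃ i : ℕ, 1 ≤ i ∧ i ≤ n ∧
    ∀ j, (stdSimplex.asOrderHom α j : ℕ) = 0 ∨ (stdSimplex.asOrderHom α j : ℕ) = i}
  map := by
    rintro m m' g α ⟨i, hi1, hin, h⟩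
    exact ⟨i, hi1, hin, fun j => h _⟩

/-- The spine `Sp n ⊆ Δ[n]`: the union of the images of the edges `i → i+1`. -/
def spineSub (n : ℕ) : Subfunctor Δ[n] where
  obj m := {α | ∃ i : ℕ, i + 1 ≤ n ∧
    ∀ j, (stdSimplex.asOrderHom α j : ℕ) = i ∨ (stdSimplex.asOrderHom α j : ℕ) = i + 1}
  map := by
    rintro m m' g α ⟨i, hi, h⟩
    exact ⟨i, hi, fun j => h _⟩

/-- The union `(SpC) n ⊆ Δ[n]` of the images of the `2`-simplices `{0, i, i+1}`, `0 < i < n`. -/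
def spcSub (n : ℕ) : Subfunctor Δ[n] where
  obj m := {α | ∃ i : ℕ, 0 < i ∧ i + 1 ≤ n ∧
    ∀ j, (stdSimplex.asOrderHom α j : ℕ) = 0 ∨ (stdSimplex.asOrderHom α j : ℕ) = i ∨ (stdSimplex.asOrderHom α j : ℕ) = i + 1}
  map := by
    rintro m m' g α ⟨i, h₀, h₁, h⟩
    exact ⟨i, h₀, h₁, fun j => h _⟩

/-- The canonical inclusion `k n : C n → Λ[n, 0]` of the left cone into the left horn. -/
def coneToHorn (n : ℕ) (hn : 2 ≤ n) : ((coneSub n).toFunctor : SSet.{0}) ⟶ Λ[n, 0] where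
  app m := ↾fun α => by
    refine ⟨α.1, ?_⟩
    obtain ⟨i, hi1, hin, h⟩ := α.2
    intro hu
    rw [Set.eq_univ_iff_forall] at hu
    obtain ⟨kv, hkv0, hkvi, hkvlt⟩ : ∃ kv : ℕ, kv ≠ 0 ∧ kv ≠ i ∧ kv < n + 1 := by
      rcases eq_or_ne i 1 with hc | hc
      · exact ⟨2, by omega, by omega, by omega⟩
      · exact ⟨1, by omega, by omega, by omega⟩
    rcases hu ⟨kv, hkvlt⟩ with hr | h0
    · obtain ⟨j, hj⟩ := hr
      have hval := congrArg Fin.val hj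
      rcases h j with h' | h' <;> simp_all
    · have := congrArg Fin.val (Set.mem_singleton_iff.1 h0)
      simp_all

/-- The nerve `IΔ^n` of the free groupoid (codiscrete groupoid) on `{0, …, n}`:
its `m`-simplices are all (not necessarily monotone) functions `Fin (m+1) → Fin (n+1)`. -/
def IDelta (n : ℕ) : SSet.{0} where
  obj m := Fin (m.unop.len + 1) → Fin (n + 1)
  map f := ↾fun α => α ∘ f.unop.toOrderHom

/-- The canonical inclusion `Δ[n] → IΔ^n`. -/
def iDeltaIncl (n : ℕ) : (Δ[n] : SSet.{0}) ⟶ IDelta n where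
  app m := ↾fun α => ⇑(stdSimplex.asOrderHom α)

/-- The vertex `k : Δ[0] → IΔ^n`. -/
def iDeltaVertex (n : ℕ) (k : Fin (n + 1)) : (Δ[0] : SSet.{0}) ⟶ IDelta n where
  app m := ↾fun _ => fun _ => k


/-! ## Bisimplicial sets, the box product and the slash construction -/

/-- Bisimplicial sets: presheaves of sets on `Δ × Δ`. -/
abbrev BSSet : Type 1 := (SimplexCategory × SimplexCategory)ᵒᵖ ⥤ Type

/-- The box product `A □ B` of two simplicial sets: `(A □ B)_{n,m} = A_n × B_m`. -/
def box (A B : SSet.{0}) : BSSet where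
  obj nm := A.obj (op nm.unop.1) × B.obj (op nm.unop.2)
  map f := ↾fun p => ⟨A.map f.unop.1.op p.1, B.map f.unop.2.op p.2⟩

/-- The box product, functorially in its second variable. -/
def boxFunctor (A : SSet.{0}) : SSet.{0} ⥤ BSSet where
  obj B := box A B
  map g :=
    { app := fun nm => ↾fun p => ⟨p.1, g.app _ p.2⟩
      naturality := fun nm nm' f => by
        ext p
        exact Prod.ext rfl (NatTrans.naturality_apply g f.unop.2.op _) }

/-- The box product is natural in its first variable. -/
def boxHomLeft {A A' : SSet.{0}} (f : A ⟶ A') (B : SSet.{0}) :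
    (boxFunctor A).obj B ⟶ (boxFunctor A').obj B where
  app nm := ↾fun p => ⟨f.app _ p.1, p.2⟩
  naturality nm nm' g := by
    ext p
    exact Prod.ext (NatTrans.naturality_apply f g.unop.1.op _) rfl

lemma boxHomLeft_natural {A A' : SSet.{0}} (f : A ⟶ A') {B B' : SSet.{0}} (g : B ⟶ B') :
    (boxFunctor A).map g ≫ boxHomLeft f B' = boxHomLeft f B ≫ (boxFunctor A').map g := rfl

/-- The simplicial set `A \ X` with `m`-simplices the bisimplicial maps `A □ Δ[m] → X`. -/
def slash (A : SSet.{0}) (X : BSSet) : SSet.{0} :=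
  SSet.stdSimplex.op ⋙ ((boxFunctor A).op ⋙ yoneda.obj X)

/-- Functoriality (contravariance) of `A \ X` in `A`. -/
def slashMap {A A' : SSet.{0}} (f : A ⟶ A') (X : BSSet) : slash A' X ⟶ slash A X :=
  Functor.whiskerLeft SSet.stdSimplex.op
    (Functor.whiskerRight (NatTrans.op
      { app := fun B => boxHomLeft f B
        naturality := fun _ _ g => (boxHomLeft_natural f g).symm }) (yoneda.obj X))

lemma slashMap_id (A : SSet.{0}) (X : BSSet) : slashMap (𝟙 A) X = 𝟙 (slash A X) := rfl

lemma slashMap_comp {A A' A'' : SSet.{0}} (f : A ⟶ A') (g : A' ⟶ A'') (X : BSSet) :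
    slashMap (f ≫ g) X = slashMap g X ≫ slashMap f X := rfl


/-! ## Columns, Reedy fibrancy, Segal and Bousfield maps -/

/-- The `n`-th column `X_n := Δ[n] \ X` of a bisimplicial set. -/
def col (n : ℕ) (X : BSSet) : SSet.{0} := slash Δ[n] X

/-- The face map `d_i : X_{n+1} → X_n` between columns. -/
def colδ {n : ℕ} (i : Fin (n + 2)) (X : BSSet) : col (n + 1) X ⟶ col n X :=
  slashMap (SSet.stdSimplex.map (SimplexCategory.δ i)) X

/-- The degeneracy map `s_i : X_n → X_{n+1}` between columns. -/
def colσ {n : ℕ} (i : Fin (n + 1)) (X : BSSet) : col n X ⟶ col (n + 1) X :=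
  slashMap (SSet.stdSimplex.map (SimplexCategory.σ i)) X

/-- A bisimplicial set is `v`-fibrant (Reedy fibrant) if `f \ X` is a Kan fibration for
every monomorphism `f` of simplicial sets. -/
def VFibrant (X : BSSet) : Prop :=
  ∀ ⦃A B : SSet.{0}⦄ (f : A ⟶ B), Mono f → KanFibration (slashMap f X)

/-- The `n`-th Bousfield map `β_n = c_n \ X : X_n → C_n \ X`. -/
def bousfieldMap (n : ℕ) (X : BSSet) : col n X ⟶ slash (coneSub n).toFunctor X :=
  slashMap (coneSub n).ι X

/-- The `n`-th Segal map `ξ_n = sp_n \ X : X_n → Sp_n \ X`. -/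
def segalMap (n : ℕ) (X : BSSet) : col n X ⟶ slash (spineSub n).toFunctor X :=
  slashMap (spineSub n).ι X

/-- A Bousfield-Segal space: a `v`-fibrant bisimplicial set whose Bousfield maps `β_n`,
`n ≥ 2`, are weak homotopy equivalences. -/
def IsBSegal (X : BSSet) : Prop :=
  VFibrant X ∧ ∀ n : ℕ, 2 ≤ n → WeakHomotopyEquivalence (bousfieldMap n X)

/-- A Segal space: a `v`-fibrant bisimplicial set whose Segal maps `ξ_n`,
`n ≥ 2`, are weak homotopy equivalences. -/
def IsSegal (X : BSSet) : Prop :=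
  VFibrant X ∧ ∀ n : ℕ, 2 ≤ n → WeakHomotopyEquivalence (segalMap n X)

/-- The map `IΔ^1 \ X → X_0` induced by the vertex `{0} : Δ[0] → IΔ^1`. -/
def completenessMap (X : BSSet) : slash (IDelta 1) X ⟶ col 0 X :=
  slashMap (iDeltaVertex 1 0) X

/-- A complete Bousfield-Segal space. -/
def IsCompleteBSegal (X : BSSet) : Prop :=
  IsBSegal X ∧ WeakHomotopyEquivalence (completenessMap X)

/-- A bisimplicial set is homotopically constant if every map of the simplex category
induces a weak homotopy equivalence between the corresponding columns. -/
def HomotopicallyConstant (X : BSSet) : Prop :=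
  ∀ ⦃a b : SimplexCategory⦄ (f : a ⟶ b),
    WeakHomotopyEquivalence (slashMap (SSet.stdSimplex.map f) X)

/-! ## Vertices, edges and the fraction operation -/

/-- The vertices of a simplicial set. -/
def vert (S : SSet.{0}) : Type := S.obj (op (SimplexCategory.mk 0))

/-- Two vertices of a simplicial set lie in the same connected component, i.e. they have
equal classes in `π₀`. -/
def hSim (S : SSet.{0}) (a b : vert S) : Prop :=
  Relation.EqvGen (fun v w : vert S => ∃ e : S.obj (op (SimplexCategory.mk 1)),
    SimplicialObject.δ S 1 e = v ∧ SimplicialObject.δ S 0 e = w) a b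

/-- The edge `0 → i` of the left cone `C n`. -/
def coneEdge (n : ℕ) (i : Fin (n + 1)) (hi : i ≠ 0) :
    (Δ[1] : SSet.{0}) ⟶ (coneSub n).toFunctor where
  app m := ↾fun β => by
    refine ⟨(SSet.stdSimplex.map (SimplexCategory.mkOfLe 0 i (Fin.zero_le i))).app m β, ?_⟩
    have hne : (i : ℕ) ≠ 0 := fun h => hi (by apply Fin.ext; simpa using h)
    refine ⟨(i : ℕ), by omega, i.is_le, fun j => ?_⟩
    have key : ∀ k : Fin 2,
        (((SimplexCategory.mkOfLe (0 : Fin (n + 1)) i (Fin.zero_le i)).toOrderHom k : Fin (n+1)) : ℕ) = 0 ∨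
        (((SimplexCategory.mkOfLe (0 : Fin (n + 1)) i (Fin.zero_le i)).toOrderHom k : Fin (n+1)) : ℕ) = i := by
      intro k
      match k with
      | 0 => left; rfl
      | 1 => right; rfl
    exact key _
  naturality m m' g := by
    ext β
    apply Subtype.ext
    exact ConcreteCategory.congr_hom ((SSet.stdSimplex.map
      (SimplexCategory.mkOfLe 0 i (Fin.zero_le i))).naturality g) β

variable (X : BSSet)

/-- Vertex component of the restriction along the edge `0 → 2` of `C₂` (the "numerator"). -/
def eF (w : vert (slash (coneSub 2).toFunctor X)) : vert (col 1 X) :=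
  (slashMap (coneEdge 2 2 (by decide)) X).app _ w

/-- Vertex component of the restriction along the edge `0 → 1` of `C₂` (the "denominator"). -/
def eG (w : vert (slash (coneSub 2).toFunctor X)) : vert (col 1 X) :=
  (slashMap (coneEdge 2 1 (by decide)) X).app _ w

/-- Vertex component of the face map `d_i : X_1 → X_0`. -/
def dV (i : Fin 2) (f : vert (col 1 X)) : vert (col 0 X) := (colδ i X).app _ f

/-- Vertex component of the degeneracy `s_0 : X_0 → X_1`; `oneV X x` is `1_x`. -/
def oneV (x : vert (col 0 X)) : vert (col 1 X) := (colσ 0 X).app _ x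

/-- The fraction operation determined by a section `μ₂` of the Bousfield map `β₂`:
`f/g := d₀ (μ₂ (f, g))`. -/
def fracV (μ₂ : slash (coneSub 2).toFunctor X ⟶ col 2 X)
    (w : vert (slash (coneSub 2).toFunctor X)) : vert (col 1 X) :=
  (colδ 0 X).app _ (μ₂.app _ w)

lemma dV_oneV (x : vert (col 0 X)) (i : Fin 2) : dV X i (oneV X x) = x := by
  have h : colσ (0 : Fin 1) X ≫ colδ i X = 𝟙 (col 0 X) := by
    rw [colδ, colσ]
    refine (slashMap_comp _ _ X).symm.trans ?_
    erw [← Functor.map_comp]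
    have : SimplexCategory.δ i ≫ SimplexCategory.σ (0 : Fin 1) = 𝟙 (SimplexCategory.mk 0) := by
      fin_cases i
      · exact SimplexCategory.δ_comp_σ_self
      · exact SimplexCategory.δ_comp_σ_succ
    rw [this]; erw [CategoryTheory.Functor.map_id, slashMap_id]; rfl
  exact ConcreteCategory.congr_hom (congrArg (fun (t : col 0 X ⟶ col 0 X) => t.app (op (SimplexCategory.mk 0)))
    h) x

/-- The identity morphism `1_x` as an element of the hom-space `X₁(x,x)`. -/
def idHom (x : vert (col 0 X)) :
    {f : vert (col 1 X) // dV X 1 f = x ∧ dV X 0 f = x} :=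
  ⟨oneV X x, dV_oneV X x 1, dV_oneV X x 0⟩


/-! ## Cellularity, pushouts of coproducts, finite compositions of pushouts -/

/-- `f` is a pushout (cobase change) of `g`. -/
def IsPushoutOf {C : Type*} [Category C] {A B X Y : C} (g : A ⟶ B) (f : X ⟶ Y) : Prop :=
  ∃ (u : A ⟶ X) (v : B ⟶ Y), IsPushout g u v f

/-- `f` is a pushout of a coproduct of maps belonging to the class `S`. -/
def IsPushoutOfCoproductOf (S : MorphismProperty SSet.{0}) {P Q : SSet.{0}} (f : P ⟶ Q) : Prop :=
  ∃ (ι : Type) (A B : ι → SSet.{0}) (g : ∀ i, A i ⟶ B i),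
    (∀ i, S (g i)) ∧
      IsPushoutOf (Limits.Sigma.desc (fun i => g i ≫ Limits.Sigma.ι B i) : (∐ A) ⟶ (∐ B)) f

/-- `f` is cellular with respect to the class `S`: it is a (transfinite, here `ℕ`-indexed)
composition of pushouts of coproducts of maps of `S`. -/
def IsCellularIn (S : MorphismProperty SSet.{0}) {X Y : SSet.{0}} (f : X ⟶ Y) : Prop :=
  ∃ (F : ℕ ⥤ SSet.{0}) (c : Cocone F) (_ : IsColimit c) (e₀ : F.obj 0 ≅ X) (e : c.pt ≅ Y),
    (∀ m : ℕ, IsPushoutOfCoproductOf S (F.map (homOfLE (Nat.le_succ m)))) ∧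
      f = e₀.inv ≫ c.ι.app 0 ≫ e.hom

/-- `f` is a finite composition of pushouts of `g`. -/
inductive FinCompPushoutsOf {A B : SSet.{0}} (g : A ⟶ B) : ∀ {X Y : SSet.{0}}, (X ⟶ Y) → Prop
| of {X Y : SSet.{0}} (f : X ⟶ Y) : IsPushoutOf g f → FinCompPushoutsOf g f
| comp {X Y Z : SSet.{0}} (f₁ : X ⟶ Y) (f₂ : Y ⟶ Z) :
      IsPushoutOf g f₁ → FinCompPushoutsOf g f₂ → FinCompPushoutsOf g (f₁ ≫ f₂)

/-! ## Lattice operations on subpresheaves -/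

variable {C : Type*} [Category C]

/-- Intersection of two subpresheaves. -/
def subInf {F : Cᵒᵖ ⥤ Type} (G G' : Subfunctor F) : Subfunctor F where
  obj U := G.obj U ∩ G'.obj U
  map i := fun _ hx => ⟨G.map i hx.1, G'.map i hx.2⟩

/-- Union of two subpresheaves. -/
def subSup {F : Cᵒᵖ ⥤ Type} (G G' : Subfunctor F) : Subfunctor F where
  obj U := G.obj U ∪ G'.obj U
  map i := by
    rintro x (hx | hx)
    · exact Or.inl (G.map i hx)
    · exact Or.inr (G'.map i hx)

lemma subInf_le_left {F : Cᵒᵖ ⥤ Type} (G G' : Subfunctor F) : subInf G G' ≤ G :=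
  fun _ => Set.inter_subset_left

lemma le_subSup_left {F : Cᵒᵖ ⥤ Type} (G G' : Subfunctor F) : G ≤ subSup G G' :=
  fun _ => Set.subset_union_left

/-! ## The coface `d¹` and the left cone -/

/-- The coface map `d¹ : Δ[n] → Δ[n+1]`. -/
def d1Map (n : ℕ) : (Δ[n] : SSet.{0}) ⟶ Δ[n + 1] :=
  SSet.stdSimplex.map (SimplexCategory.δ 1)

/-- The restriction of `d¹` to a map `C n → C (n+1) ∩ d¹[Δ[n]]`. -/
def coneToInter (n : ℕ) : ((coneSub n).toFunctor : SSet.{0}) ⟶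
    (subInf (coneSub (n + 1)) (Subfunctor.range (d1Map n))).toFunctor where
  app m := ↾fun α => by
    refine ⟨(d1Map n).app m α.1, ?_, ⟨α.1, rfl⟩⟩
    obtain ⟨i, hi1, hin, h⟩ := α.2
    refine ⟨i + 1, by omega, by omega, fun j => ?_⟩
    have key : stdSimplex.asOrderHom ((d1Map n).app m α.1) j
        = (1 : Fin (n + 2)).succAbove (stdSimplex.asOrderHom α.1 j) := rfl
    rcases h j with h' | h'
    · left
      have h0 : stdSimplex.asOrderHom α.1 j = 0 := by
        apply Fin.ext; exact h'
      rw [key, h0, Fin.succAbove_of_castSucc_lt]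
      · simp
      · simp
    · right
      rw [key, Fin.succAbove_of_le_castSucc]
      · simp [Fin.val_succ, h']
      · rw [Fin.le_def]
        simpa using by omega
  naturality m m' g := by
    ext α
    apply Subtype.ext
    exact ConcreteCategory.congr_hom ((d1Map n).naturality g) α.1

/-! ## Horizontally constant bisimplicial sets and closure properties -/

/-- `p₁* A`: the horizontally constant bisimplicial set with `(p₁* A)_{n,m} = A_n`. -/
def pHorizontal (A : SSet.{0}) : BSSet where
  obj nm := A.obj (op nm.unop.1)
  map f := A.map f.unop.1.op

/-- A class of maps of bisimplicial sets is stable under pullbacks. -/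
def StableUnderPullbacksB (F : MorphismProperty BSSet) : Prop :=
  ∀ ⦃W X Y Z : BSSet⦄ (p' : W ⟶ X) (f' : W ⟶ Z) (f : X ⟶ Y) (p : Z ⟶ Y),
    IsPullback p' f' f p → F f → F f'

/-- A class of maps of bisimplicial sets is stable under retracts. -/
def StableUnderRetractsB (F : MorphismProperty BSSet) : Prop :=
  ∀ ⦃X Y X' Y' : BSSet⦄ (f : X ⟶ Y) (g : X' ⟶ Y'), IsRetractOf f g → F g → F f

/-- A class of maps of bisimplicial sets is closed under sequential (inverse) limits:
limits of towers of arrows belonging to the class again belong to the class. -/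
def ClosedUnderSequentialLimitsB (F : MorphismProperty BSSet) : Prop :=
  ∀ (G : ℕᵒᵖ ⥤ Arrow BSSet), (∀ n : ℕᵒᵖ, F (G.obj n).hom) →
    ∀ (c : Cone G), IsLimit c → F c.pt.hom



/-!
Let `C_N^j ⊆ Δ[N]` be the union of the left cone `C_N` with the faces `∂_t Δ[N]` opposite to the
vertices `t` with `j ≤ t ≤ N`, so that `C_N^{N+1} = C_N` and `C_N^1 = Λ[N,0]`. The face map
`d^t : Δ[N-1] → Δ[N]` (`t ≥ 1`) pulls `C_N^{t+1}` back to `C_{N-1}^t`, hence `C_N^{t+1} ⊆ C_N^t`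
is a pushout of `C_{N-1}^t ⊆ Δ[N-1]`. Composing these for `t = N, …, j` shows that
`C_N ⊆ C_N^j` lies in `A` as soon as all `C_{N-1}^t ⊆ Δ[N-1]`, `t ≥ j`, do; for `j = 1` this is `k_N`.
The latter inclusions are obtained by induction on `N`, starting from `C_1^t = Δ[1]`: the
composite of `C_N ⊆ C_N^t` with `C_N^t ⊆ Δ[N]` is `c_N`, so right cancellation applies.
-/

section

variable {A : MorphismProperty SSet.{0}}

lemma IsSaturated.finite_comp_mem (hA : IsSaturated A) {k : ℕ} (F : Fin (k + 1) ⥤ SSet.{0})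
    (hF : ∀ i : Fin k, A (F.map (homOfLE i.castSucc_le_succ))) :
    A (F.map (homOfLE (Fin.zero_le (Fin.last k)))) := by
  have hlast : IsTerminal (Fin.last k) :=
    IsTerminal.ofUniqueHom (fun j => homOfLE (Fin.le_last j)) (fun _ _ => Subsingleton.elim _ _)
  refine hA.transfinite _ inferInstance inferInstance inferInstance inferInstance F _
    (colimitOfDiagramTerminal hlast F) (fun j hj => ?_) (fun j hj => ?_)
  · have hne : j ≠ Fin.last k := by
      rintro rfl
      exact hj fun _ _ => Fin.le_last _
    obtain ⟨i, rfl⟩ := Fin.eq_castSucc_of_ne_last hne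
    -- `Order.succ i.castSucc = i.succ` holds only propositionally
    have key : ∀ (j : Fin (k + 1)) (h : i.castSucc ≤ j), j = i.succ → A (F.map (homOfLE h)) := by
      rintro _ _ rfl
      exact hF i
    exact key _ _ (Fin.orderSucc_castSucc i)
  · exact absurd hj Order.not_isSuccLimit_of_isSuccArchimedean

lemma IsSaturated.id_mem (hA : IsSaturated A) (X : SSet.{0}) : A (𝟙 X) :=
  hA.finite_comp_mem (ComposableArrows.mk₀ X) (fun i => i.elim0)

lemma IsSaturated.of_isIso (hA : IsSaturated A) {X Y : SSet.{0}} (f : X ⟶ Y) [IsIso f] : A f :=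
  hA.retract f (𝟙 X) ⟨Arrow.homMk (𝟙 X) (inv f), Arrow.homMk (𝟙 X) f, by ext <;> simp⟩
    (hA.id_mem X)

lemma IsSaturated.comp_mem (hA : IsSaturated A) {X Y Z : SSet.{0}} {f : X ⟶ Y} {g : Y ⟶ Z}
    (hf : A f) (hg : A g) : A (f ≫ g) :=
  hA.finite_comp_mem (ComposableArrows.mk₂ f g) (fun i => by fin_cases i <;> assumption)

lemma isPushout_preimage {X Y : SSet.{0}} (f : Y ⟶ X) [Mono f] (B : X.Subcomplex) :
    IsPushout (B.fromPreimage f) (B.preimage f).ι (Subcomplex.homOfLE le_sup_right)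
      (Subcomplex.lift f (le_sup_left : Subcomplex.range f ≤ Subcomplex.range f ⊔ B)) where
  w := rfl
  isColimit' := ⟨evaluationJointlyReflectsColimits _ fun m => by
    refine (isColimitMapCoconePushoutCoconeEquiv _ _).2 (IsPushout.isColimit ?_)
    have hf : Function.Injective (f.app m) := injective_of_mono (f.app m)
    refine Types.isPushout_of_isPullback_of_mono' ?_ ?_ ?_
    · rw [Types.isPullback_iff]
      refine ⟨rfl, fun y₁ y₂ h => Subtype.ext h.2, fun b y h => ⟨⟨y, ?_⟩, ?_, rfl⟩⟩
      · have hy : b.1 = f.app m y := congrArg Subtype.val h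
        show f.app m y ∈ B.obj m
        exact hy ▸ b.2
      · exact Subtype.ext (congrArg Subtype.val h).symm
    · refine Set.eq_univ_of_forall fun ⟨x, hx⟩ => ?_
      rcases hx with ⟨y, rfl⟩ | hx
      · exact Or.inr ⟨y, rfl⟩
      · exact Or.inl ⟨⟨x, hx⟩, rfl⟩
    · exact fun y₁ y₂ _ _ h => hf (congrArg Subtype.val h)⟩

lemma IsSaturated.homOfLE_mem_of_mono (hA : IsSaturated A) {X Y : SSet.{0}} (f : Y ⟶ X) [Mono f]
    {B D : X.Subcomplex} (h : B ≤ D) (hD : Subcomplex.range f ⊔ B = D)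
    (hB : A (B.preimage f).ι) : A (Subcomplex.homOfLE h) := by
  subst hD
  exact hA.pushout _ _ _ _ (isPushout_preimage f B).flip hB

lemma homOfLE_mem_iff_of_eq {X : SSet.{0}} {S S' T T' : X.Subcomplex} (hS : S = S') (hT : T = T')
    (h : S ≤ T) (h' : S' ≤ T') : A (Subcomplex.homOfLE h) ↔ A (Subcomplex.homOfLE h') := by
  subst hS hT
  rfl

/-- `C_N^j = C_N ∪ ⋃_{j ≤ t ≤ N} ∂_t Δ[N]`, where `∂_t Δ[N]` consists of the simplices missing
the vertex `t`. -/
def coneWithFaces (N j : ℕ) : (Δ[N] : SSet.{0}).Subcomplex where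
  obj m := {α | α ∈ (coneSub N).obj m ∨
    ∃ t : ℕ, j ≤ t ∧ t ≤ N ∧ ∀ v, (stdSimplex.asOrderHom α v : ℕ) ≠ t}
  map g _ := Or.imp (fun h => (coneSub N).map g h) fun ⟨t, hj, hN, ht⟩ => ⟨t, hj, hN, fun _ => ht _⟩

lemma coneWithFaces_antitone (N : ℕ) : Antitone (coneWithFaces N) :=
  fun _ _ h _ _ => Or.imp_right fun ⟨t, hj, hN, ht⟩ => ⟨t, h.trans hj, hN, ht⟩

lemma coneWithFaces_eq_coneSub {N j : ℕ} (h : N < j) : coneWithFaces N j = coneSub N := by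
  ext m α
  exact or_iff_left (by omega)

lemma coneWithFaces_eq_horn {N : ℕ} (hN : 2 ≤ N) : coneWithFaces N 1 = Λ[N, 0] := by
  ext m α
  rw [SSet.mem_horn_iff, Set.ne_univ_iff_exists_notMem]
  simp only [Set.mem_union, Set.mem_range, Set.mem_singleton_iff, not_or, not_exists, Fin.ext_iff,
    Fin.val_zero]
  constructor
  · rintro (⟨i, hi1, hiN, hα⟩ | ⟨t, ht1, htN, hα⟩)
    · obtain ⟨w, hw0, hwi, hwN⟩ : ∃ w : ℕ, w ≠ 0 ∧ w ≠ i ∧ w ≤ N :=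
        ⟨if i = 1 then 2 else 1, by split_ifs <;> omega, by split_ifs <;> omega,
          by split_ifs <;> omega⟩
      exact ⟨⟨w, by omega⟩, fun v hv => by have := hα v; dsimp only at hv; omega, hw0⟩
    · exact ⟨⟨t, by omega⟩, hα, by simp; omega⟩
  · rintro ⟨w, hα, hw0⟩
    exact Or.inr ⟨w, by omega, w.is_le, hα⟩

lemma coneWithFaces_one_eq_top (j : ℕ) : coneWithFaces 1 j = ⊤ := by
  ext m α
  exact iff_of_true
    (Or.inl ⟨1, le_rfl, le_rfl, fun v => by have := (stdSimplex.asOrderHom α v).isLt; omega⟩)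
    trivial

lemma range_δ_sup_coneWithFaces {N : ℕ} (s : Fin (N + 2)) :
    Subcomplex.range (stdSimplex.δ s) ⊔ coneWithFaces (N + 1) (s + 1) =
      coneWithFaces (N + 1) s := by
  rw [stdSimplex.range_δ]
  ext m α
  simp only [stdSimplex.face_obj, Subfunctor.max_obj, Set.mem_union, Set.mem_ofPred_eq,
    Finset.image_subset_iff, Finset.mem_compl, Finset.mem_singleton]
  constructor
  · rintro (hα | hα)
    · exact Or.inr ⟨s, le_rfl, by omega, fun v h => hα v (Finset.mem_univ _) (Fin.ext h)⟩
    · exact coneWithFaces_antitone _ (Nat.le_succ _) _ hα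
  · rintro (hα | ⟨t, hst, htN, hα⟩)
    · exact Or.inr (Or.inl hα)
    · rcases hst.eq_or_lt with rfl | hlt
      · exact Or.inl fun v _ h => hα v (congrArg Fin.val h)
      · exact Or.inr (Or.inr ⟨t, hlt, htN, hα⟩)

lemma val_succAbove {n : ℕ} (s : Fin (n + 2)) (x : Fin (n + 1)) :
    (s.succAbove x : ℕ) = if (x : ℕ) < s then (x : ℕ) else (x : ℕ) + 1 := by
  rcases lt_or_ge (x : ℕ) s with h | h
  · rw [Fin.succAbove_of_castSucc_lt _ _ (by exact h), if_pos h]; rfl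
  · rw [Fin.succAbove_of_le_castSucc _ _ (by exact h), if_neg (by omega)]; rfl

lemma preimage_δ_coneWithFaces {P : ℕ} (hP : 1 ≤ P) {s : Fin (P + 2)} (hs : s ≠ 0) :
    (coneWithFaces (P + 1) (s + 1)).preimage (stdSimplex.δ s) = coneWithFaces P s := by
  have hs : 1 ≤ (s : ℕ) := Nat.one_le_iff_ne_zero.2 (Fin.val_ne_zero_iff.2 hs)
  ext m α
  have hδ (v) : (stdSimplex.asOrderHom ((stdSimplex.δ s).app m α) v : ℕ) =
      if (stdSimplex.asOrderHom α v : ℕ) < s then (stdSimplex.asOrderHom α v : ℕ)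
      else (stdSimplex.asOrderHom α v : ℕ) + 1 :=
    val_succAbove s _
  simp only [Subcomplex.preimage_obj, Set.mem_preimage]
  constructor
  · rintro (⟨i, hi1, hiN, hα⟩ | ⟨t, hst, htN, hα⟩)
    · rcases lt_trichotomy i s with hlt | rfl | hgt
      · refine Or.inl ⟨i, hi1, by omega, fun v => ?_⟩
        have := hα v; have := hδ v; split_ifs at this <;> omega
      · -- `d^s` misses the vertex `s`, so the simplex lies over the vertex `0`
        refine Or.inl ⟨1, le_rfl, hP, fun v => ?_⟩
        have := hα v; have := hδ v; split_ifs at this <;> omega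
      · refine Or.inl ⟨i - 1, by omega, by omega, fun v => ?_⟩
        have := hα v; have := hδ v; split_ifs at this <;> omega
    · refine Or.inr ⟨t - 1, by omega, by omega, fun v => ?_⟩
      have := hα v; have := hδ v; split_ifs at this <;> omega
  · rintro (⟨i, hi1, hiN, hα⟩ | ⟨t, hst, htN, hα⟩)
    · refine Or.inl ⟨if i < s then i else i + 1, by split_ifs <;> omega, by split_ifs <;> omega,
        fun v => ?_⟩
      have := hα v; have := hδ v; split_ifs at * <;> omega
    · refine Or.inr ⟨t + 1, by omega, by omega, fun v => ?_⟩
      have := hα v; have := hδ v; split_ifs at this <;> omega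

lemma coneSub_le_horn {n : ℕ} (hn : 2 ≤ n) : coneSub.{0} n ≤ Λ[n, 0] :=
  calc coneSub n = coneWithFaces n (n + 1) := (coneWithFaces_eq_coneSub (Nat.lt_succ_self n)).symm
    _ ≤ coneWithFaces n 1 := coneWithFaces_antitone n (by omega)
    _ = Λ[n, 0] := coneWithFaces_eq_horn hn

lemma coneToHorn_eq_homOfLE {n : ℕ} (hn : 2 ≤ n) :
    coneToHorn n hn = Subcomplex.homOfLE (coneSub_le_horn hn) :=
  rfl

lemma IsSaturated.homOfLE_coneWithFaces_succ_mem (hA : IsSaturated A) {P t : ℕ} (hP : 1 ≤ P)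
    (ht : 1 ≤ t) (htP : t ≤ P + 1) (hface : A (coneWithFaces P t).ι) :
    A (Subcomplex.homOfLE (coneWithFaces_antitone (P + 1) t.le_succ)) := by
  obtain ⟨s, rfl⟩ : ∃ s : Fin (P + 2), (s : ℕ) = t := ⟨⟨t, by omega⟩, rfl⟩
  refine hA.homOfLE_mem_of_mono (stdSimplex.δ s) _ (range_δ_sup_coneWithFaces s) ?_
  rwa [preimage_δ_coneWithFaces hP (Fin.val_ne_zero_iff.1 (by omega))]

lemma IsSaturated.homOfLE_coneWithFaces_mem (hA : IsSaturated A) {P j : ℕ} (hP : 1 ≤ P)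
    (hj : 1 ≤ j) (hjP : j ≤ P + 2)
    (hfaces : ∀ t, j ≤ t → t ≤ P + 1 → A (coneWithFaces P t).ι) :
    A (Subcomplex.homOfLE (coneWithFaces_antitone (P + 1) hjP)) := by
  induction hjP using Nat.decreasingInduction with
  | self => exact hA.id_mem _
  | of_succ j hjP ih =>
    exact hA.comp_mem (ih (by omega) fun t ht => hfaces t (by omega))
      (hA.homOfLE_coneWithFaces_succ_mem hP hj (by omega) (hfaces j le_rfl (by omega)))

lemma IsSaturated.coneWithFaces_ι_mem (hA : IsSaturated A) (hrc : RightCancel A) {M : ℕ}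
    (hM : 1 ≤ M) (hcone : ∀ m, 2 ≤ m → m ≤ M → A (coneSub m).ι) {j : ℕ} (hj : 1 ≤ j)
    (hjM : j ≤ M + 1) : A (coneWithFaces M j).ι := by
  induction M, hM using Nat.le_induction generalizing j with
  | base =>
    have := (Subfunctor.eq_top_iff_isIso _).1 (coneWithFaces_one_eq_top j)
    exact hA.of_isIso _
  | succ M hM ih =>
    have hchain := hA.homOfLE_coneWithFaces_mem hM hj hjM
      fun t ht htM => ih (fun m hm hmM => hcone m hm (by omega)) (by omega) htM
    refine hrc _ _ inferInstance inferInstance ?_ hchain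
    rw [Subcomplex.homOfLE_ι, coneWithFaces_eq_coneSub (by omega)]
    exact hcone (M + 1) (by omega) le_rfl

end

/-- Fix `n ≥ 2` and let `A` be a saturated class of morphisms of simplicial
sets with the right cancellation property for monomorphisms which contains the left cone
inclusions `c_m` for all `2 ≤ m < n`. Then the canonical inclusion `k_n : C_n → Λ[n,0]`
belongs to `A`. -/
theorem coneToHorn_mem (A : MorphismProperty SSet.{0})
    (hA : IsSaturated A) (hrc : RightCancel A) (n : ℕ) (hn : 2 ≤ n)
    (h : ∀ m : ℕ, 2 ≤ m → m < n → A ((coneSub m).ι)) :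
    A (coneToHorn n hn) := by
  obtain ⟨P, rfl⟩ : ∃ P, n = P + 1 := ⟨n - 1, by omega⟩
  have hfaces : ∀ t, 1 ≤ t → t ≤ P + 1 → A (coneWithFaces P t).ι := fun t ht htP =>
    hA.coneWithFaces_ι_mem hrc (by omega) (fun m hm hmP => h m hm (by omega)) ht htP
  have hchain := hA.homOfLE_coneWithFaces_mem (by omega) le_rfl (by omega) hfaces
  rw [coneToHorn_eq_homOfLE]
  exact (homOfLE_mem_iff_of_eq (coneWithFaces_eq_coneSub (by omega))
    (coneWithFaces_eq_horn hn) _ _).1 hchain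

end BousfieldPaper
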